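/- For 0 <= j <= i <= n, the number of lattice paths from (i,j) to (n,0) using steps (1,1), (1,-1), (1,0) that never go below the x-axis equals the coefficient of x^{n-i} in x^j * M(x)^{j+1}, where M is the Motzkin generating function. -/

import Mathlib

/-!
Write `P(L, h)` for the number of paths of length `L` from height `h`. Both sides obey the same
recursion: splitting a path by its first step gives
`P(L+1, g+1) = P(L, g+2) + P(L, g) + P(L, g+1)` and `P(L+1, 0) = P(L, 1) + P(L, 0)`, and writing
`X^(g+1) M^(g+2) = X · (X^g M^(g+1)) · M` and expanding `M = 1 + X M + X² M²` gives the same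
recursion for the coefficients. The functional equation of `M` up to degree `L` is itself the
case `h ∈ {0, 1}` of the theorem in lower degrees, so everything is proved together by strong
induction on `L`.
-/

/-- Paths with steps (1,1),(1,-1),(1,0) encoded by their height increments,
starting at height `h`, staying weakly above the x-axis and ending at height 0. -/
noncomputable def latticeCount (len : ℕ) (h : ℕ) : ℕ :=
  Nat.card {l : List ℤ // l.length = len ∧ (∀ x ∈ l, x = 1 ∨ x = -1 ∨ x = 0) ∧
    (∀ m, 0 ≤ (h : ℤ) + (l.take m).sum) ∧ (h : ℤ) + l.sum = 0}

/-- The `n`-th Motzkin number, as the number of Motzkin paths of length `n`. -/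
noncomputable def motzkin (n : ℕ) : ℕ := latticeCount n 0

namespace PowerSeries

variable {R : Type*}

theorem coeff_mul_eq_of_coeff_eq [Semiring R] {A B : R⟦X⟧} {n : ℕ}
    (h : ∀ k ≤ n, coeff k A = coeff k B) (C : R⟦X⟧) :
    coeff n (C * A) = coeff n (C * B) := by
  simp only [coeff_mul]
  refine Finset.sum_congr rfl fun p hp => ?_
  rw [h p.2 (by rw [Finset.HasAntidiagonal.mem_antidiagonal] at hp; omega)]

theorem coeff_succ_one_add_X_mul_add_X_sq_mul_sq [CommSemiring R] (M : R⟦X⟧) (k : ℕ) :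
    coeff (k + 1) (1 + X * M + X ^ 2 * M ^ 2) = coeff k (X * M ^ 2) + coeff k M := by
  rw [show (X : R⟦X⟧) ^ 2 * M ^ 2 = X * (X * M ^ 2) by ring, map_add, map_add, coeff_one,
    coeff_succ_X_mul, coeff_succ_X_mul, if_neg k.succ_ne_zero, zero_add, add_comm]

theorem coeff_succ_X_pow_succ_mul_pow [CommSemiring R] {M : R⟦X⟧} {m : ℕ}
    (hM : ∀ k ≤ m, coeff k M = coeff k (1 + X * M + X ^ 2 * M ^ 2)) (g : ℕ) :
    coeff (m + 1) (X ^ (g + 1) * M ^ (g + 2)) =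
      coeff m (X ^ (g + 2) * M ^ (g + 3)) + coeff m (X ^ g * M ^ (g + 1)) +
        coeff m (X ^ (g + 1) * M ^ (g + 2)) := by
  calc coeff (m + 1) (X ^ (g + 1) * M ^ (g + 2))
      = coeff m ((X ^ g * M ^ (g + 1)) * M) := by
        rw [show X ^ (g + 1) * M ^ (g + 2) = X * (X ^ g * M ^ (g + 1) * M) by ring,
          coeff_succ_X_mul]
    _ = coeff m ((X ^ g * M ^ (g + 1)) * (1 + X * M + X ^ 2 * M ^ 2)) :=
        coeff_mul_eq_of_coeff_eq hM _
    _ = _ := by rw [← map_add, ← map_add]; ring_nf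

end PowerSeries

open PowerSeries

namespace LatticePath

def IsPath (len h : ℕ) (l : List ℤ) : Prop :=
  l.length = len ∧ (∀ x ∈ l, x = 1 ∨ x = -1 ∨ x = 0) ∧
    (∀ m, 0 ≤ (h : ℤ) + (l.take m).sum) ∧ (h : ℤ) + l.sum = 0

abbrev Path (len h : ℕ) := {l : List ℤ // IsPath len h l}

theorem latticeCount_eq_card (len h : ℕ) : latticeCount len h = Nat.card (Path len h) := rfl

instance (len h : ℕ) : Finite (Path len h) := by
  let S : Set ℤ := {1, -1, 0}
  have hfin : {l : List S | l.length = len}.Finite := List.finite_length_eq S len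
  refine Set.Finite.subset (hfin.image (List.map Subtype.val)) fun l hl => ?_
  exact ⟨l.attachWith (· ∈ S) hl.2.1, (List.length_attachWith ..).trans hl.1,
    List.attachWith_map_subtype_val _⟩

theorem isPath_cons_iff {N h h' : ℕ} {a : ℤ} {t : List ℤ} (hstep : a = 1 ∨ a = -1 ∨ a = 0)
    (hh : (h : ℤ) + a = h') : IsPath (N + 1) h (a :: t) ↔ IsPath N h' t := by
  simp only [IsPath, List.length_cons, add_left_inj, List.forall_mem_cons, hstep, true_and,
    List.sum_cons, ← hh, add_assoc]
  have hprefix : (∀ m, 0 ≤ (h : ℤ) + ((a :: t).take m).sum) ↔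
      ∀ m, 0 ≤ (h : ℤ) + (a + (t.take m).sum) :=
    ⟨fun hp m => by simpa using hp (m + 1), fun hp m => by cases m <;> simp [hp]⟩
  rw [hprefix]

def Path.cons {N h h' : ℕ} (a : ℤ) (hstep : a = 1 ∨ a = -1 ∨ a = 0) (hh : (h : ℤ) + a = h')
    (t : Path N h') : Path (N + 1) h :=
  ⟨a :: t.1, (isPath_cons_iff hstep hh).2 t.2⟩

theorem latticeCount_zero_zero : latticeCount 0 0 = 1 := by
  rw [latticeCount_eq_card, Nat.card_eq_one_iff_exists]
  refine ⟨⟨[], by simp [IsPath]⟩, fun ⟨l, hl⟩ => Subtype.ext (List.length_eq_zero_iff.1 hl.1)⟩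

theorem latticeCount_zero_succ (g : ℕ) : latticeCount 0 (g + 1) = 0 := by
  rw [latticeCount_eq_card, Nat.card_eq_zero]
  refine Or.inl ⟨fun ⟨l, hl⟩ => ?_⟩
  obtain rfl := List.length_eq_zero_iff.1 hl.1
  simp only [IsPath, List.sum_nil, add_zero] at hl
  omega

theorem latticeCount_succ_zero (N : ℕ) :
    latticeCount (N + 1) 0 = latticeCount N 1 + latticeCount N 0 := by
  let f : Path N 1 ⊕ Path N 0 → Path (N + 1) 0 :=
    Sum.elim (Path.cons 1 (by norm_num) (by norm_num)) (Path.cons 0 (by norm_num) (by norm_num))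
  have hf : f.Bijective := by
    constructor
    · rintro (t | t) (s | s) he <;> simp_all [f, Path.cons, Subtype.ext_iff]
    · rintro ⟨_ | ⟨a, t⟩, hl⟩
      · simp [IsPath] at hl
      rcases hl.2.1 a (by simp) with rfl | rfl | rfl
      · exact ⟨.inl ⟨t, (isPath_cons_iff (by norm_num) (by norm_num)).1 hl⟩, rfl⟩
      · simpa using hl.2.2.1 1
      · exact ⟨.inr ⟨t, (isPath_cons_iff (by norm_num) (by norm_num)).1 hl⟩, rfl⟩
  simp only [latticeCount_eq_card, ← Nat.card_eq_of_bijective f hf, Nat.card_sum]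

theorem latticeCount_succ_succ (N g : ℕ) :
    latticeCount (N + 1) (g + 1) =
      latticeCount N (g + 2) + latticeCount N g + latticeCount N (g + 1) := by
  let f : Path N (g + 2) ⊕ Path N g ⊕ Path N (g + 1) → Path (N + 1) (g + 1) :=
    Sum.elim (Path.cons 1 (by norm_num) (by push_cast; ring))
      (Sum.elim (Path.cons (-1) (by norm_num) (by push_cast; ring))
        (Path.cons 0 (by norm_num) (by push_cast; ring)))
  have hf : f.Bijective := by
    constructor
    · rintro (t | t | t) (s | s | s) he <;> simp_all [f, Path.cons, Subtype.ext_iff]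
    · rintro ⟨_ | ⟨a, t⟩, hl⟩
      · simp [IsPath] at hl
      rcases hl.2.1 a (by simp) with rfl | rfl | rfl
      · exact ⟨.inl ⟨t, (isPath_cons_iff (by norm_num) (by push_cast; ring)).1 hl⟩, rfl⟩
      · exact ⟨.inr (.inl ⟨t, (isPath_cons_iff (by norm_num) (by push_cast; ring)).1 hl⟩), rfl⟩
      · exact ⟨.inr (.inr ⟨t, (isPath_cons_iff (by norm_num) (by push_cast; ring)).1 hl⟩), rfl⟩
  simp only [latticeCount_eq_card, ← Nat.card_eq_of_bijective f hf, Nat.card_sum, add_assoc]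

end LatticePath

noncomputable abbrev motzkinSeries : PowerSeries ℤ := PowerSeries.mk fun m => (motzkin m : ℤ)

open LatticePath in
theorem latticeCount_eq_coeff (L h : ℕ) :
    (latticeCount L h : ℤ) = coeff L (X ^ h * motzkinSeries ^ (h + 1)) := by
  induction L using Nat.strong_induction_on generalizing h with
  | _ L IH =>
  match L, h with
  | L, 0 => simp [motzkin]
  | 0, g + 1 => simp [latticeCount_zero_succ, pow_succ' X, mul_assoc]
  | m + 1, g + 1 =>
    have hM : ∀ k ≤ m, coeff k motzkinSeries =
        coeff k (1 + X * motzkinSeries + X ^ 2 * motzkinSeries ^ 2) := by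
      rintro (_ | k) hk
      · simp [motzkin, latticeCount_zero_zero]
      · rw [coeff_succ_one_add_X_mul_add_X_sq_mul_sq, coeff_mk, motzkin,
          latticeCount_succ_zero, Nat.cast_add, IH k (by omega) 1, IH k (by omega) 0]
        norm_num
    rw [latticeCount_succ_succ, coeff_succ_X_pow_succ_mul_pow hM]
    push_cast
    rw [IH m m.lt_succ_self (g + 2), IH m m.lt_succ_self g, IH m m.lt_succ_self (g + 1)]

open PowerSeries in
theorem X_i_j_coeff_general (i j n : ℕ) :
    (latticeCount (n - i) j : ℤ) =
      PowerSeries.coeff (n - i)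
        (X ^ j * (PowerSeries.mk fun m => (motzkin m : ℤ)) ^ (j + 1)) :=
  latticeCount_eq_coeff (n - i) j

open PowerSeries in
/-- The number of paths from `(i,j)` to `(n,0)` staying weakly above the x-axis is the
coefficient of `x^{n-i}` in `x^j M(x)^{j+1}`. -/
theorem X_i_j_coeff (i j n : ℕ) (hji : j ≤ i) (hin : i ≤ n) :
    (latticeCount (n - i) j : ℤ) =
      PowerSeries.coeff (n - i)
        (X ^ j * (PowerSeries.mk fun m => (motzkin m : ℤ)) ^ (j + 1)) :=
  X_i_j_coeff_general i j n
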